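/- arXiv:1307.0836 — 3 statements merged into one kernel-verified Lean document; each statement's English description precedes it below -/
import Mathlib

section
/- For any Boolean function f : {0,1}ⁿ → Bool computed by a fan-in-2 Boolean formula of depth d, and any 5-cycle α ∈ S₅, there exists a width-5 branching program of length at most 4^d whose evaluation on input x equals α if f(x) = true and equals the identity permutation if f(x) = false. -/
set_option maxRecDepth 100000

/-- Fan-in-2 Boolean formulas over `n` variables: literals, AND, OR. -/
inductive Formula (n : ℕ) where
  | pos : Fin n → Formula n
  | neg : Fin n → Formula n
  | and : Formula n → Formula n → Formula n
  | or : Formula n → Formula n → Formula n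

def Formula.depth {n : ℕ} : Formula n → ℕ
  | .pos _ => 0
  | .neg _ => 0
  | .and φ ψ => max φ.depth ψ.depth + 1
  | .or φ ψ => max φ.depth ψ.depth + 1

def Formula.eval {n : ℕ} : Formula n → (Fin n → Bool) → Bool
  | .pos i, x => x i
  | .neg i, x => ! x i
  | .and φ ψ, x => φ.eval x && ψ.eval x
  | .or φ ψ, x => φ.eval x || ψ.eval x

def bpEval {n : ℕ} (P : List (Fin n × Equiv.Perm (Fin 5) × Equiv.Perm (Fin 5)))
    (x : Fin n → Bool) : Equiv.Perm (Fin 5) :=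
  P.foldl (fun acc t => (if x t.1 then t.2.2 else t.2.1) * acc) 1

/- ### Auxiliary material -/

private lemma bp_foldl_shift {n : ℕ}
    (P : List (Fin n × Equiv.Perm (Fin 5) × Equiv.Perm (Fin 5)))
    (x : Fin n → Bool) (a : Equiv.Perm (Fin 5)) :
    P.foldl (fun acc t => (if x t.1 then t.2.2 else t.2.1) * acc) a
      = bpEval P x * a := by
  induction P generalizing a with
  | nil => simp [bpEval]
  | cons h t ih =>
      simp only [List.foldl_cons, bpEval] at *
      rw [ih, ih ((if x h.1 then h.2.2 else h.2.1) * 1)]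
      group

private lemma bpEval_append {n : ℕ}
    (P Q : List (Fin n × Equiv.Perm (Fin 5) × Equiv.Perm (Fin 5)))
    (x : Fin n → Bool) :
    bpEval (P ++ Q) x = bpEval Q x * bpEval P x := by
  unfold bpEval
  rw [List.foldl_append, bp_foldl_shift]
  rfl

private instance : DecidablePred (Equiv.Perm.IsCycle (α := Fin 5)) := fun f =>
  decidable_of_iff (∃ x, f x ≠ x ∧ ∀ y, f y ≠ y → f.SameCycle x y) Iff.rfl

private def barS : Equiv.Perm (Fin 5) := c[0, 1, 2, 3, 4]
private def barT : Equiv.Perm (Fin 5) := c[0, 2, 1, 4, 3]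

private lemma cycleType_of (f : Equiv.Perm (Fin 5)) (h1 : f.IsCycle)
    (h2 : f.support.card = 5) : f.cycleType = {5} := by
  rw [h1.cycleType, h2]

private lemma barS_ct : barS.cycleType = {5} :=
  cycleType_of _ (by decide) (by decide)

private lemma barT_ct : barT.cycleType = {5} :=
  cycleType_of _ (by decide) (by decide)

private lemma barComm_ct : (barT⁻¹ * barS⁻¹ * barT * barS).cycleType = {5} :=
  cycleType_of _ (by decide) (by decide)

/-- Every 5-cycle is a commutator of two 5-cycles. -/
private lemma comm5 (α : Equiv.Perm (Fin 5)) (hα : α.cycleType = {5}) :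
    ∃ σ τ : Equiv.Perm (Fin 5), σ.cycleType = {5} ∧ τ.cycleType = {5} ∧
      α = τ⁻¹ * σ⁻¹ * τ * σ := by
  have hconj : IsConj (barT⁻¹ * barS⁻¹ * barT * barS) α := by
    rw [Equiv.Perm.isConj_iff_cycleType_eq, barComm_ct, hα]
  obtain ⟨g, hg⟩ := isConj_iff.mp hconj
  refine ⟨g * barS * g⁻¹, g * barT * g⁻¹, ?_, ?_, ?_⟩
  · rw [Equiv.Perm.cycleType_conj]; exact barS_ct
  · rw [Equiv.Perm.cycleType_conj]; exact barT_ct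
  · rw [← hg]; group

private lemma inv_ct (σ : Equiv.Perm (Fin 5)) (h : σ.cycleType = {5}) :
    σ⁻¹.cycleType = {5} := by rw [Equiv.Perm.cycleType_inv]; exact h

private lemma barrington_aux {n : ℕ} (φ : Formula n) :
    ∀ β : Equiv.Perm (Fin 5), β.cycleType = {5} → ∀ c : Equiv.Perm (Fin 5),
    ∃ P : List (Fin n × Equiv.Perm (Fin 5) × Equiv.Perm (Fin 5)),
      P.length ≤ 4 ^ φ.depth ∧
      ∀ x : Fin n → Bool, bpEval P x = c * (if φ.eval x then β else 1) := by
  induction φ with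
  | pos i =>
      intro β hβ c
      refine ⟨[(i, c, c * β)], by simp [Formula.depth], fun x => ?_⟩
      cases h : x i <;> simp [bpEval, Formula.eval, h]
  | neg i =>
      intro β hβ c
      refine ⟨[(i, c * β, c)], by simp [Formula.depth], fun x => ?_⟩
      cases h : x i <;> simp [bpEval, Formula.eval, h]
  | and φ ψ ih1 ih2 =>
      intro β hβ c
      obtain ⟨σ, τ, hσ, hτ, hcomm⟩ := comm5 β hβ
      obtain ⟨P1, l1, h1⟩ := ih1 σ hσ 1
      obtain ⟨P2, l2, h2⟩ := ih2 τ hτ 1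
      obtain ⟨P3, l3, h3⟩ := ih1 σ⁻¹ (inv_ct σ hσ) 1
      obtain ⟨P4, l4, h4⟩ := ih2 τ⁻¹ (inv_ct τ hτ) c
      refine ⟨P1 ++ P2 ++ P3 ++ P4, ?_, fun x => ?_⟩
      · have e1 : 4 ^ φ.depth ≤ 4 ^ max φ.depth ψ.depth :=
          Nat.pow_le_pow_right (by norm_num) (le_max_left _ _)
        have e2 : 4 ^ ψ.depth ≤ 4 ^ max φ.depth ψ.depth :=
          Nat.pow_le_pow_right (by norm_num) (le_max_right _ _)
        have : 4 ^ (Formula.and φ ψ).depth = 4 * 4 ^ max φ.depth ψ.depth := by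
          simp [Formula.depth, pow_succ]; ring
        simp only [List.length_append, this]
        omega
      · rw [bpEval_append, bpEval_append, bpEval_append, h1, h2, h3, h4]
        show _ = c * (if (φ.eval x && ψ.eval x) then β else 1)
        cases hφ : φ.eval x <;> cases hψ : ψ.eval x <;>
          simp only [hφ, hψ, Bool.and_self, Bool.and_true, Bool.and_false,
            Bool.true_and, Bool.false_and, if_true, if_false, one_mul,
            mul_one, if_neg, Bool.false_eq_true, reduceIte]
        all_goals (try rw [hcomm]); group
  | or φ ψ ih1 ih2 =>
      intro β hβ c
      obtain ⟨σ, τ, hσ, hτ, hcomm⟩ := comm5 β⁻¹ (inv_ct β hβ)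
      obtain ⟨P1, l1, h1⟩ := ih1 σ⁻¹ (inv_ct σ hσ) σ
      obtain ⟨P2, l2, h2⟩ := ih2 τ⁻¹ (inv_ct τ hτ) τ
      obtain ⟨P3, l3, h3⟩ := ih1 σ hσ σ⁻¹
      obtain ⟨P4, l4, h4⟩ := ih2 τ hτ (c * β * τ⁻¹)
      refine ⟨P1 ++ P2 ++ P3 ++ P4, ?_, fun x => ?_⟩
      · have e1 : 4 ^ φ.depth ≤ 4 ^ max φ.depth ψ.depth :=
          Nat.pow_le_pow_right (by norm_num) (le_max_left _ _)
        have e2 : 4 ^ ψ.depth ≤ 4 ^ max φ.depth ψ.depth :=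
          Nat.pow_le_pow_right (by norm_num) (le_max_right _ _)
        have : 4 ^ (Formula.or φ ψ).depth = 4 * 4 ^ max φ.depth ψ.depth := by
          simp [Formula.depth, pow_succ]; ring
        simp only [List.length_append, this]
        omega
      · rw [bpEval_append, bpEval_append, bpEval_append, h1, h2, h3, h4]
        show _ = c * (if (φ.eval x || ψ.eval x) then β else 1)
        have hβ2 : β = σ⁻¹ * τ⁻¹ * σ * τ := by
          rw [← inv_inv β, hcomm]; group
        cases hφ : φ.eval x <;> cases hψ : ψ.eval x <;>
          simp only [hφ, hψ, Bool.or_self, Bool.or_true, Bool.or_false,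
            Bool.true_or, Bool.false_or, if_true, if_false, one_mul,
            mul_one, Bool.false_eq_true, reduceIte]
        all_goals (try rw [hβ2]); group

/-- Barrington's theorem (existence statement). -/
theorem barrington {n : ℕ} (φ : Formula n) (α : Equiv.Perm (Fin 5))
    (hα : α.cycleType = {5}) :
    ∃ P : List (Fin n × Equiv.Perm (Fin 5) × Equiv.Perm (Fin 5)),
      P.length ≤ 4 ^ φ.depth ∧
      ∀ x : Fin n → Bool, bpEval P x = if φ.eval x then α else 1 := by
  obtain ⟨P, hl, he⟩ := barrington_aux φ α hα 1
  exact ⟨P, hl, fun x => by rw [he x, one_mul]⟩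
end

section
/- If g : S₅ and α is a 5-cycle, then α is a commutator of two 5-cycles: there exist 5-cycles β, γ ∈ S₅ with α = β·γ·β⁻¹·γ⁻¹. -/
set_option maxRecDepth 10000

private lemma aux_ct : (c[0,2,4,3,1] : Equiv.Perm (Fin 5)).cycleType = {5} ∧
    (c[0,2,3,1,4] : Equiv.Perm (Fin 5)).cycleType = {5} ∧
    (c[0,1,2,3,4] : Equiv.Perm (Fin 5)).cycleType = {5} ∧
    (c[0,1,2,3,4] : Equiv.Perm (Fin 5)) =
      c[0,2,4,3,1] * c[0,2,3,1,4] * (c[0,2,4,3,1] : Equiv.Perm (Fin 5))⁻¹ *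
        (c[0,2,3,1,4] : Equiv.Perm (Fin 5))⁻¹ := by
  refine ⟨by decide, by decide, by decide, by decide⟩

theorem five_cycle_is_commutator_of_five_cycles
    (α : Equiv.Perm (Fin 5)) (hα : α.cycleType = {5}) :
    ∃ β γ : Equiv.Perm (Fin 5), β.cycleType = {5} ∧ γ.cycleType = {5} ∧
      α = β * γ * β⁻¹ * γ⁻¹ := by
  obtain ⟨hb, hg, hc, hcomm⟩ := aux_ct
  have hconj : IsConj (c[0,1,2,3,4] : Equiv.Perm (Fin 5)) α := by
    rw [Equiv.Perm.isConj_iff_cycleType_eq, hc, hα]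
  obtain ⟨σ, hσ⟩ := isConj_iff.mp hconj
  refine ⟨σ * c[0,2,4,3,1] * σ⁻¹, σ * c[0,2,3,1,4] * σ⁻¹, ?_, ?_, ?_⟩
  · rw [Equiv.Perm.cycleType_conj, hb]
  · rw [Equiv.Perm.cycleType_conj, hg]
  · rw [← hσ, hcomm]; group
end

section
/- Let p : {0,1}ⁿ → Bool be any predicate, let α be a 5-cycle in S₅, and let τ = (1 2). Define permutations of {0,1}ⁿ × Fin 5 by: T (x, j) = (x, τ j); A (x, j) = (x, if p x then α j else j). Then the composite A⁻¹ ∘ T ∘ A ∘ T is the identity map if and only if p is identically false. -/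
theorem controlled_commutator_eq_id_iff (n : ℕ) (p : (Fin n → Bool) → Bool) :
    (let τ : Equiv.Perm (Fin 5) := Equiv.swap 0 1
     let α : Equiv.Perm (Fin 5) := finRotate 5
     let T : (Fin n → Bool) × Fin 5 → (Fin n → Bool) × Fin 5 := fun q => (q.1, τ q.2)
     let A : (Fin n → Bool) × Fin 5 → (Fin n → Bool) × Fin 5 :=
       fun q => (q.1, if p q.1 then α q.2 else q.2)
     let A' : (Fin n → Bool) × Fin 5 → (Fin n → Bool) × Fin 5 :=
       fun q => (q.1, if p q.1 then α⁻¹ q.2 else q.2)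
     A' ∘ T ∘ A ∘ T = id) ↔ ∀ x, p x = false := by
  simp only
  constructor
  · intro h x
    by_contra hx
    have hx' : p x = true := by
      cases hp : p x
      · exact absurd hp hx
      · rfl
    have := congrFun h (x, 0)
    simp only [Function.comp_apply, hx', if_true, id_eq] at this
    have h2 : (finRotate 5)⁻¹ ((Equiv.swap 0 1) ((finRotate 5) ((Equiv.swap 0 1) (0 : Fin 5)))) = 0 :=
      congrArg Prod.snd this
    revert h2
    decide
  · intro h
    funext q
    simp [h q.1, Function.comp_apply]
end
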